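/- With G₃, G₃[3] and G' as defined, the subgroup of G' generated by G₃[3] together with the matrix −1 has index 243 in G' (this is the covering degree of X(G₃[3]) → X(G')). -/

import Mathlib

open Matrix

/-- The primitive cube root of unity `ω = e^{2πi/3}`. -/
noncomputable def ω : ℂ := Complex.exp (2 * Real.pi * Complex.I / 3)

/-- `z ∈ 𝓔 = ℤ[ω]`, the ring of Eisenstein integers. -/
def IsEisenstein (z : ℂ) : Prop := ∃ a b : ℤ, z = (a : ℂ) + (b : ℂ) * ω

/-- The Gram matrix `J` of the hermitian form
`⟨a,b⟩ = ā₁b₂ + ā₂b₁ − ā₃b₃ − ā₄b₄` on `ℂ⁴`. -/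
def J4 : Matrix (Fin 4) (Fin 4) ℂ :=
  !![0, 1, 0, 0; 1, 0, 0, 0; 0, 0, -1, 0; 0, 0, 0, -1]

/-- The six vectors (each of norm `⟨b,b⟩ = −1`) along which the distinguished
triflections are taken. -/
def triVecs : Set (Fin 4 → ℂ) :=
  {![0, 0, 1, 0], ![0, 0, 0, 1], ![0, 1, 1, 0], ![0, 1, -1, 0], ![0, 1, 0, 1],
    ![0, 1, 0, -1]}

/-- The matrix of the triflection `a ↦ a − (1−ω)·(⟨b,a⟩/⟨b,b⟩)·b` along a vector `b`
with `⟨b,b⟩ = −1`; here `⟨b,a⟩ = (star b) ⬝ᵥ (J *ᵥ a)`, so the matrix is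
`1 + (1−ω)·b·((star b)ᵀ J)`. -/
noncomputable def triflectionMatrix (b : Fin 4 → ℂ) : Matrix (Fin 4) (Fin 4) ℂ :=
  1 + (1 - ω) • Matrix.vecMulVec b (Matrix.vecMul (star b) J4)

/-- The six distinguished triflections, as elements of `GL₄(ℂ)`. -/
noncomputable def triflections : Set (GL (Fin 4) ℂ) :=
  {x | ∃ b ∈ triVecs, (x : Matrix (Fin 4) (Fin 4) ℂ) = triflectionMatrix b}

/-!
Reduction modulo `3` identifies `ℤ[ω]/(3)` with the dual numbers `𝔽₃[ε]` via `ω ↦ 1 + ε`, and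
maps `G₃` to `GL₄(𝔽₃[ε])` with kernel `G₃[3]`. An integral triflection `1 + (1 - ω) b b*J`
reduces to `1 - ε b bᵀJ`, so `G'` lands in the abelian group `{1 + εN} ≅ (M₄(𝔽₃), +)`, and its
image is the `𝔽₃`-span of the six matrices `b bᵀJ`, which is `5`-dimensional. Hence
`[G' : G' ∩ G₃[3]] = 3⁵`. Adjoining `-1` does not change the intersection with `G'`, because
`-1` reduces to `-1 ∉ {1 + εN}`.
-/

namespace Complex

variable {z : ℂ}

lemma im_ne_zero_of_sq_add_self_add_one_eq_zero (hz : z ^ 2 + z + 1 = 0) : z.im ≠ 0 := by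
  intro him
  have hre := congrArg re hz
  simp [sq, him] at hre
  nlinarith [sq_nonneg (z.re + 1 / 2)]

lemma star_eq_neg_one_sub_of_sq_add_self_add_one_eq_zero (hz : z ^ 2 + z + 1 = 0) :
    star z = -1 - z := by
  have him := congrArg im hz
  simp only [sq, add_im, mul_im, one_im, zero_im, add_zero] at him
  have hre : z.re = -1 / 2 := by
    have : z.im * (2 * z.re + 1) = 0 := by linear_combination him
    rcases mul_eq_zero.1 this with h | h
    · exact absurd h (im_ne_zero_of_sq_add_self_add_one_eq_zero hz)
    · linarith
  apply ext <;> norm_num [hre]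

end Complex

namespace Subring

variable {n R T : Type*} [Fintype n] [DecidableEq n] [Ring R] [Ring T] {S : Subring R}

def matrixMap (f : S →+* T) : S.matrix (n := n) →+* Matrix n n T where
  toFun M := Matrix.of fun i j => f ⟨M.1 i j, M.2 i j⟩
  map_one' := by
    ext i j
    by_cases h : i = j
    · subst h
      simp only [Matrix.of_apply, OneMemClass.coe_one, Matrix.one_apply_eq]
      exact f.map_one
    · simp only [Matrix.of_apply, OneMemClass.coe_one, Matrix.one_apply_ne h]
      exact f.map_zero
  map_mul' M N := by
    ext i j
    simp only [Matrix.of_apply, Matrix.mul_apply, ← map_mul, ← map_sum]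
    congr 1
    ext
    simp [Matrix.mul_apply]
  map_zero' := by ext i j; exact f.map_zero
  map_add' M N := by ext i j; exact f.map_add ⟨M.1 i j, M.2 i j⟩ ⟨N.1 i j, N.2 i j⟩

lemma matrixMap_apply (f : S →+* T) (M : S.matrix (n := n)) (i j : n) :
    matrixMap f M i j = f ⟨M.1 i j, M.2 i j⟩ := rfl

end Subring

namespace Matrix

section

variable {n R : Type*} [Fintype n] [DecidableEq n] [CommRing R] [StarRing R]

def isometryGroup (J : Matrix n n R) : Subgroup (GL n R) where
  carrier := {γ | (γ : Matrix n n R)ᴴ * J * γ = J}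
  one_mem' := by simp
  mul_mem' {a b} ha hb := by
    change ((a * b : GL n R) : Matrix n n R)ᴴ * J * ((a * b : GL n R) : Matrix n n R) = J
    calc ((a * b : GL n R) : Matrix n n R)ᴴ * J * ((a * b : GL n R) : Matrix n n R)
        = (b : Matrix n n R)ᴴ * ((a : Matrix n n R)ᴴ * J * a) * b := by
          simp only [Units.val_mul, conjTranspose_mul, Matrix.mul_assoc]
      _ = J := by rw [ha, hb]
  inv_mem' {γ} hγ := by
    change ((γ⁻¹ : GL n R) : Matrix n n R)ᴴ * J * ((γ⁻¹ : GL n R) : Matrix n n R) = J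
    calc ((γ⁻¹ : GL n R) : Matrix n n R)ᴴ * J * ((γ⁻¹ : GL n R) : Matrix n n R)
        = ((γ⁻¹ : GL n R) : Matrix n n R)ᴴ * ((γ : Matrix n n R)ᴴ * J * γ) *
            ((γ⁻¹ : GL n R) : Matrix n n R) := by
          rw [hγ]
      _ = ((γ * γ⁻¹ : GL n R) : Matrix n n R)ᴴ * J * ((γ * γ⁻¹ : GL n R) : Matrix n n R) := by
          simp only [Units.val_mul, conjTranspose_mul, Matrix.mul_assoc]
      _ = J := by simp

end

open TrivSqZeroExt

variable {n R : Type*} [Fintype n] [CommRing R]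

lemma map_inr_mul_map_inr (N M : Matrix n n R) :
    N.map (inr : R → DualNumber R) * M.map inr = 0 :=
  Matrix.ext fun i j => by simp [mul_apply]

variable [DecidableEq n]

def dualUnit : Multiplicative (Matrix n n R) →* GL n (DualNumber R) where
  toFun N :=
    { val := 1 + N.toAdd.map inr
      inv := 1 + (-N.toAdd).map inr
      val_inv := by
        rw [Matrix.map_neg _ (inr_neg R)]; simp [add_mul, mul_add, map_inr_mul_map_inr]
      inv_val := by
        rw [Matrix.map_neg _ (inr_neg R)]; simp [add_mul, mul_add, map_inr_mul_map_inr] }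
  map_one' := by ext : 1; simp
  map_mul' N M := by
    ext : 1
    simp [add_mul, mul_add, map_inr_mul_map_inr, Matrix.map_add _ (inr_add R), add_assoc]

lemma val_dualUnit (N : Matrix n n R) :
    (dualUnit (Multiplicative.ofAdd N) : Matrix n n (DualNumber R)) = 1 + N.map inr := rfl

lemma dualUnit_injective : Function.Injective (dualUnit (n := n) (R := R)) := by
  intro N M h
  have := congrArg (fun g : GL n (DualNumber R) => (g : Matrix n n (DualNumber R))) h
  simp only [dualUnit, MonoidHom.coe_mk, OneHom.coe_mk, add_right_inj] at this
  exact Matrix.map_injective inr_injective this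

lemma neg_one_notMem_range_dualUnit [Nonempty n] (hR : (-1 : R) ≠ 1) :
    -1 ∉ (dualUnit (n := n) (R := R)).range := by
  rintro ⟨N, hN⟩
  obtain ⟨i⟩ := ‹Nonempty n›
  have := congrArg (fun g : GL n (DualNumber R) => fst ((g : Matrix n n (DualNumber R)) i i)) hN
  simp [dualUnit] at this
  exact hR this.symm

end Matrix

namespace Subgroup

variable {G Q : Type*} [Group G] [Group Q]

lemma mem_or_neg_mem_of_mem_closure_union_neg_one [HasDistribNeg G] (N : Subgroup G) {x : G}
    (hx : x ∈ closure ((N : Set G) ∪ {-1})) : x ∈ N ∨ -x ∈ N := by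
  induction hx using closure_induction with
  | mem y hy =>
    rcases hy with hy | rfl
    · exact .inl hy
    · exact .inr (by simp)
  | one => exact .inl N.one_mem
  | mul a b _ _ ha hb =>
    rcases ha with ha | ha <;> rcases hb with hb | hb
    · exact .inl (mul_mem ha hb)
    · exact .inr (by simpa using mul_mem ha hb)
    · exact .inr (by simpa using mul_mem ha hb)
    · exact .inl (by simpa using mul_mem ha hb)
  | inv a _ ha => exact ha.imp inv_mem fun h => by simpa using inv_mem h

lemma range_comp_inclusion_closure {L : Subgroup G} (f : L →* Q) {S : Set G}
    (hS : closure S ≤ L) :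
    (f.comp (inclusion hS)).range = closure (f '' (L.subtype ⁻¹' S)) := by
  rw [MonoidHom.range_eq_map, ← closure_preimage_eq_top S, MonoidHom.map_closure]
  congr 1
  ext y
  constructor
  · rintro ⟨⟨x, hx⟩, hxS, rfl⟩
    exact ⟨⟨x, hS hx⟩, hxS, rfl⟩
  · rintro ⟨⟨x, hxL⟩, hxS, rfl⟩
    exact ⟨⟨x, subset_closure hxS⟩, hxS, rfl⟩

end Subgroup

lemma Submodule.span_zmod_eq_addSubgroupClosure {M : Type*} [AddCommGroup M] (n : ℕ)
    [Module (ZMod n) M] (s : Set M) :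
    (Submodule.span (ZMod n) s).toAddSubgroup = AddSubgroup.closure s :=
  le_antisymm
    (fun _ hx => (Submodule.span_le (p := AddSubgroup.toZModSubmodule n (.closure s))).2
      AddSubgroup.subset_closure hx)
    (AddSubgroup.closure_le _ |>.2 Submodule.subset_span)

lemma LinearIndependent.natCard_span {K V ι : Type*} [Ring K] [AddCommGroup V] [Module K V]
    [Fintype ι] {v : ι → V} (hv : LinearIndependent K v) :
    Nat.card (Submodule.span K (Set.range v)) = Nat.card K ^ Fintype.card ι := by
  rw [Nat.card_congr (Module.Basis.span hv).equivFun.toEquiv, Nat.card_fun,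
    Nat.card_eq_fintype_card (α := ι)]

lemma isPrimitiveRoot_ω : IsPrimitiveRoot ω 3 := by
  simpa [ω] using Complex.isPrimitiveRoot_exp 3 (by norm_num)

lemma ω_sq_add_ω_add_one : ω ^ 2 + ω + 1 = 0 := by
  have h := isPrimitiveRoot_ω.geom_sum_eq_zero (by norm_num)
  simp only [Finset.sum_range_succ, Finset.sum_range_zero] at h
  linear_combination h

def eisenstein : Subring ℂ where
  carrier := {z | IsEisenstein z}
  mul_mem' := by
    rintro _ _ ⟨a, b, rfl⟩ ⟨c, d, rfl⟩
    exact ⟨a * c - b * d, a * d + b * c - b * d, by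
      push_cast; linear_combination (b * d : ℂ) * ω_sq_add_ω_add_one⟩
  one_mem' := ⟨1, 0, by simp⟩
  add_mem' := by
    rintro _ _ ⟨a, b, rfl⟩ ⟨c, d, rfl⟩
    exact ⟨a + c, b + d, by push_cast; ring⟩
  zero_mem' := ⟨0, 0, by simp⟩
  neg_mem' := by
    rintro _ ⟨a, b, rfl⟩
    exact ⟨-a, -b, by push_cast; ring⟩

namespace eisenstein

lemma star_mem {z : ℂ} (hz : z ∈ eisenstein) : star z ∈ eisenstein := by
  obtain ⟨a, b, rfl⟩ := hz
  refine ⟨a - b, -b, ?_⟩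
  simp only [star_add, star_mul', star_intCast,
    Complex.star_eq_neg_one_sub_of_sq_add_self_add_one_eq_zero ω_sq_add_ω_add_one]
  push_cast; ring

lemma coords_unique {a b c d : ℤ} (h : (a : ℂ) + b * ω = c + d * ω) : a = c ∧ b = d := by
  have hbd : b = d := by
    have him := congrArg Complex.im h
    simp only [Complex.add_im, Complex.mul_im, Complex.intCast_re, Complex.intCast_im,
      zero_mul, add_zero, zero_add] at him
    exact_mod_cast mul_right_cancel₀
      (Complex.im_ne_zero_of_sq_add_self_add_one_eq_zero ω_sq_add_ω_add_one) him
  subst hbd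
  exact ⟨by exact_mod_cast add_right_cancel h, rfl⟩

noncomputable def coords (z : eisenstein) : ℤ × ℤ :=
  (z.2.choose, z.2.choose_spec.choose)

lemma coords_eq {z : eisenstein} {a b : ℤ} (h : (z : ℂ) = a + b * ω) : coords z = (a, b) := by
  have hz : (z : ℂ) = (coords z).1 + (coords z).2 * ω := z.2.choose_spec.choose_spec
  obtain ⟨ha, hb⟩ := coords_unique (hz.symm.trans h)
  exact Prod.ext ha hb

noncomputable def lift {R : Type*} [CommRing R] (w : R) (hw : w ^ 2 + w + 1 = 0) :
    eisenstein →+* R where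
  toFun z := (coords z).1 + (coords z).2 * w
  map_one' := by rw [coords_eq (a := 1) (b := 0) (by simp)]; simp
  map_zero' := by rw [coords_eq (a := 0) (b := 0) (by simp)]; simp
  map_add' x y := by
    obtain ⟨a, b, hx⟩ := x.2
    obtain ⟨c, d, hy⟩ := y.2
    rw [coords_eq hx, coords_eq hy, coords_eq (a := a + c) (b := b + d)
      (by push_cast [Subring.coe_add, hx, hy]; ring)]
    push_cast; ring
  map_mul' x y := by
    obtain ⟨a, b, hx⟩ := x.2
    obtain ⟨c, d, hy⟩ := y.2
    rw [coords_eq hx, coords_eq hy, coords_eq (a := a * c - b * d) (b := a * d + b * c - b * d)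
      (by push_cast [Subring.coe_mul, hx, hy]; linear_combination (b * d : ℂ) * ω_sq_add_ω_add_one)]
    push_cast; linear_combination -(b * d : R) * hw

lemma lift_apply {R : Type*} [CommRing R] {w : R} {hw : w ^ 2 + w + 1 = 0} {z : eisenstein}
    {a b : ℤ} (h : (z : ℂ) = a + b * ω) : lift w hw z = a + b * w := by
  simp [lift, coords_eq h]

end eisenstein

open DualNumber

/-- `ℤ[ω]/(3) ≅ 𝔽₃[ε]`, with `1 - ω ↦ -ε`. -/
noncomputable def reduceThree : eisenstein →+* DualNumber (ZMod 3) :=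
  eisenstein.lift (1 + ε) (by
    ext <;> simp [sq] <;> decide)

lemma reduceThree_apply {z : eisenstein} {a b : ℤ} (h : (z : ℂ) = a + b * ω) :
    reduceThree z = TrivSqZeroExt.inl ((a + b : ℤ) : ZMod 3) + TrivSqZeroExt.inr (b : ZMod 3) := by
  rw [reduceThree, eisenstein.lift_apply h]
  ext <;> simp

lemma reduceThree_eq_zero_iff {z : eisenstein} :
    reduceThree z = 0 ↔ ∃ a b : ℤ, (z : ℂ) = 3 * (a + b * ω) := by
  obtain ⟨a, b, hz⟩ := z.2
  rw [reduceThree_apply hz, TrivSqZeroExt.ext_iff]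
  simp only [TrivSqZeroExt.fst_add, TrivSqZeroExt.fst_inl, TrivSqZeroExt.fst_inr,
    TrivSqZeroExt.snd_add, TrivSqZeroExt.snd_inl, TrivSqZeroExt.snd_inr,
    TrivSqZeroExt.fst_zero, TrivSqZeroExt.snd_zero, add_zero, zero_add,
    ZMod.intCast_zmod_eq_zero_iff_dvd]
  constructor
  · rintro ⟨hab, ⟨b', rfl⟩⟩
    obtain ⟨a', ha'⟩ : (3 : ℤ) ∣ a := by simpa using (Int.dvd_add_left ⟨b', rfl⟩).1 hab
    exact ⟨a', b', by rw [hz, ha']; push_cast; ring⟩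
  · rintro ⟨a', b', h⟩
    obtain ⟨rfl, rfl⟩ := eisenstein.coords_unique (a := a) (b := b) (c := 3 * a') (d := 3 * b')
      (by rw [← hz, h]; push_cast; ring)
    exact ⟨⟨a' + b', by ring⟩, ⟨b', rfl⟩⟩

lemma J4_mul_J4 : J4 * J4 = 1 := by
  ext i j
  fin_cases i <;> fin_cases j <;> simp [J4, Matrix.mul_apply, Fin.sum_univ_four]

lemma conjTranspose_J4 : J4ᴴ = J4 := by
  ext i j
  fin_cases i <;> fin_cases j <;> simp [J4]

lemma J4_mem_matrix : J4 ∈ eisenstein.matrix := by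
  intro i j
  fin_cases i <;> fin_cases j <;> simp [J4, zero_mem, one_mem]

lemma J4_mul_conjTranspose_mul_J4_mul {M : Matrix (Fin 4) (Fin 4) ℂ} (h : Mᴴ * J4 * M = J4) :
    J4 * Mᴴ * J4 * M = 1 := by
  rw [Matrix.mul_assoc (J4 * Mᴴ), Matrix.mul_assoc J4, ← Matrix.mul_assoc Mᴴ, h, J4_mul_J4]

def picardGroup : Subgroup (GL (Fin 4) ℂ) :=
  (eisenstein.matrix.toSubmonoid.units) ⊓ Matrix.isometryGroup J4

lemma mem_picardGroup {γ : GL (Fin 4) ℂ} :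
    γ ∈ picardGroup ↔ (γ : Matrix (Fin 4) (Fin 4) ℂ) ∈ eisenstein.matrix ∧
      (γ : Matrix (Fin 4) (Fin 4) ℂ)ᴴ * J4 * γ = J4 := by
  refine ⟨fun h => ⟨h.1.1, h.2⟩, fun ⟨hE, hJ⟩ =>
    ⟨Submonoid.mem_units_of_val_mem_inv_val_mem _ hE ?_, hJ⟩⟩
  rw [Matrix.coe_units_inv, Matrix.inv_eq_left_inv (J4_mul_conjTranspose_mul_J4_mul hJ)]
  exact mul_mem (mul_mem J4_mem_matrix fun i j => eisenstein.star_mem (hE j i)) J4_mem_matrix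

namespace picardGroup

noncomputable def reduce : picardGroup →* GL (Fin 4) (DualNumber (ZMod 3)) :=
  ((Subring.matrixMap reduceThree).toMonoidHom.comp
    (MonoidHom.codRestrict ((Units.coeHom _).comp picardGroup.subtype)
      eisenstein.matrix.toSubmonoid fun γ => (mem_picardGroup.1 γ.2).1)).toHomUnits

lemma val_reduce (γ : picardGroup) :
    (reduce γ : Matrix (Fin 4) (Fin 4) (DualNumber (ZMod 3))) =
      Subring.matrixMap reduceThree ⟨(γ : GL (Fin 4) ℂ), (mem_picardGroup.1 γ.2).1⟩ := rfl

lemma reduce_eq_one_iff (γ : picardGroup) :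
    reduce γ = 1 ↔ ∀ i j, ∃ a b : ℤ,
      (((γ : GL (Fin 4) ℂ) : Matrix (Fin 4) (Fin 4) ℂ) - 1) i j = 3 * ((a : ℂ) + (b : ℂ) * ω) := by
  rw [Units.ext_iff, val_reduce, Units.val_one, ← (Subring.matrixMap reduceThree).map_one,
    ← sub_eq_zero, ← map_sub, ← Matrix.ext_iff]
  exact forall₂_congr fun i j => reduceThree_eq_zero_iff

lemma reduce_neg {γ : GL (Fin 4) ℂ} (hγ : γ ∈ picardGroup) (hγ' : -γ ∈ picardGroup) :
    reduce ⟨-γ, hγ'⟩ = -reduce ⟨γ, hγ⟩ := by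
  rw [Units.ext_iff, Units.val_neg, val_reduce, val_reduce, ← map_neg]
  rfl

end picardGroup

noncomputable def picardGroupLevelThree : Subgroup (GL (Fin 4) ℂ) :=
  picardGroup.reduce.ker.map picardGroup.subtype

lemma mem_picardGroupLevelThree {γ : GL (Fin 4) ℂ} :
    γ ∈ picardGroupLevelThree ↔ γ ∈ picardGroup ∧ ∀ i j, ∃ a b : ℤ,
      ((γ : Matrix (Fin 4) (Fin 4) ℂ) - 1) i j = 3 * ((a : ℂ) + (b : ℂ) * ω) := by
  constructor
  · rintro ⟨γ', hγ', rfl⟩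
    exact ⟨γ'.2, (picardGroup.reduce_eq_one_iff γ').1 hγ'⟩
  · rintro ⟨hγ, hc⟩
    exact ⟨⟨γ, hγ⟩, (picardGroup.reduce_eq_one_iff _).2 hc, rfl⟩

lemma picardGroupLevelThree_le : picardGroupLevelThree ≤ picardGroup :=
  Subgroup.map_subtype_le _

lemma picardGroup.reduce_eq_one {γ : GL (Fin 4) ℂ} (hγ : γ ∈ picardGroupLevelThree) :
    picardGroup.reduce ⟨γ, picardGroupLevelThree_le hγ⟩ = 1 :=
  (picardGroup.reduce_eq_one_iff _).2 (mem_picardGroupLevelThree.1 hγ).2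

lemma star_one_sub_ω : star (1 - ω) = 2 + ω := by
  rw [star_sub, star_one,
    Complex.star_eq_neg_one_sub_of_sq_add_self_add_one_eq_zero ω_sq_add_ω_add_one]
  ring

lemma conjTranspose_triflectionMatrix_mul_J4_mul {b : Fin 4 → ℂ}
    (hb : (star b ᵥ* J4) ⬝ᵥ b = -1) :
    (triflectionMatrix b)ᴴ * J4 * triflectionMatrix b = J4 := by
  rw [triflectionMatrix]
  set w := star b ᵥ* J4
  set Q := vecMulVec (J4 *ᵥ b) w
  have hPJ : (vecMulVec b w)ᴴ * J4 = Q := by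
    rw [conjTranspose_vecMulVec, star_vecMul, conjTranspose_J4, star_star, vecMulVec_mul]
  have hJP : J4 * vecMulVec b w = Q := mul_vecMulVec _ _ _
  have hQP : Q * vecMulVec b w = -Q := by
    rw [vecMulVec_mul_vecMulVec, hb, vecMulVec_smul, neg_one_smul]
  simp only [conjTranspose_add, conjTranspose_one, conjTranspose_smul, star_one_sub_ω, add_mul,
    mul_add, one_mul, mul_one, Matrix.smul_mul, Matrix.mul_smul, hPJ, hJP, hQP]
  linear_combination (norm := module) ω_sq_add_ω_add_one • Q

def J4Int : Matrix (Fin 4) (Fin 4) ℤ :=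
  !![0, 1, 0, 0; 1, 0, 0, 0; 0, 0, -1, 0; 0, 0, 0, -1]

lemma map_J4Int : J4Int.map (Int.cast : ℤ → ℂ) = J4 := by
  ext i j
  fin_cases i <;> fin_cases j <;> simp [J4, J4Int]

section IntegralTriflection

variable (v : Fin 4 → ℤ)

lemma star_intCast_vecMul_J4 :
    star (Int.cast ∘ v : Fin 4 → ℂ) ᵥ* J4 = Int.cast ∘ (v ᵥ* J4Int) := by
  have hv : star (Int.cast ∘ v : Fin 4 → ℂ) = Int.cast ∘ v := funext fun i => star_intCast _
  ext i
  rw [hv, ← map_J4Int]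
  exact (RingHom.map_vecMul (Int.castRingHom ℂ) J4Int v i).symm

lemma triflectionMatrix_intCast :
    triflectionMatrix (Int.cast ∘ v) = 1 + (1 - ω) • (vecMulVec v (v ᵥ* J4Int)).map Int.cast := by
  rw [triflectionMatrix, star_intCast_vecMul_J4]
  congr 2
  ext i j
  simp [vecMulVec_apply]

lemma triflectionMatrix_intCast_apply (i j : Fin 4) :
    triflectionMatrix (Int.cast ∘ v) i j =
      (((if i = j then 1 else 0) + v i * (v ᵥ* J4Int) j : ℤ) : ℂ) +
        ((-(v i * (v ᵥ* J4Int) j) : ℤ) : ℂ) * ω := by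
  rw [triflectionMatrix_intCast]
  by_cases h : i = j <;> simp [h, vecMulVec_apply] <;> ring

lemma triflectionMatrix_intCast_mem : triflectionMatrix (Int.cast ∘ v) ∈ eisenstein.matrix :=
  fun i j => ⟨_, _, triflectionMatrix_intCast_apply v i j⟩

lemma picardGroup.reduce_triflection {γ : GL (Fin 4) ℂ} (hγ : γ ∈ picardGroup)
    (hγv : (γ : Matrix (Fin 4) (Fin 4) ℂ) = triflectionMatrix (Int.cast ∘ v)) :
    picardGroup.reduce ⟨γ, hγ⟩ =
      Matrix.dualUnit (.ofAdd (-(vecMulVec v (v ᵥ* J4Int)).map Int.cast)) := by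
  refine Units.ext (Matrix.ext fun i j => ?_)
  rw [picardGroup.val_reduce, Matrix.val_dualUnit, Subring.matrixMap_apply,
    reduceThree_apply (by exact hγv ▸ triflectionMatrix_intCast_apply v i j)]
  by_cases h : i = j <;> simp [h, vecMulVec_apply]

end IntegralTriflection

def triVecsInt : Fin 6 → Fin 4 → ℤ :=
  ![![0, 0, 1, 0], ![0, 0, 0, 1], ![0, 1, 1, 0], ![0, 1, -1, 0], ![0, 1, 0, 1], ![0, 1, 0, -1]]

lemma triVecs_eq_range : triVecs = Set.range fun k => (Int.cast ∘ triVecsInt k : Fin 4 → ℂ) := by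
  ext b
  simp only [triVecs, Set.mem_insert_iff, Set.mem_singleton_iff, Set.mem_range,
    Fin.exists_fin_succ, Fin.exists_fin_zero]
  simp [triVecsInt, eq_comm, ← List.ofFn_inj, Function.comp_def]

lemma norm_intCast_triVecsInt (k : Fin 6) :
    (star (Int.cast ∘ triVecsInt k : Fin 4 → ℂ) ᵥ* J4) ⬝ᵥ (Int.cast ∘ triVecsInt k) = -1 := by
  have h : ∀ k, (triVecsInt k ᵥ* J4Int) ⬝ᵥ triVecsInt k = -1 := by decide
  rw [star_intCast_vecMul_J4]
  exact (RingHom.map_dotProduct (Int.castRingHom ℂ) _ _).symm.trans (by simp [h k])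

def triflectionEpsPart (k : Fin 6) : Matrix (Fin 4) (Fin 4) (ZMod 3) :=
  -(vecMulVec (triVecsInt k) (triVecsInt k ᵥ* J4Int)).map Int.cast

lemma triflectionEpsPart_five :
    triflectionEpsPart 5 = triflectionEpsPart 0 + 2 • triflectionEpsPart 1 + triflectionEpsPart 2 +
      triflectionEpsPart 3 + 2 • triflectionEpsPart 4 := by
  decide

set_option maxRecDepth 10000 in
lemma linearIndependent_triflectionEpsPart_castSucc :
    LinearIndependent (ZMod 3) (triflectionEpsPart ∘ Fin.castSucc) :=
  Fintype.linearIndependent_iff.2 (by decide)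

lemma card_span_triflectionEpsPart :
    Nat.card (Submodule.span (ZMod 3) (Set.range triflectionEpsPart)) = 3 ^ 5 := by
  have hspan : Submodule.span (ZMod 3) (Set.range triflectionEpsPart) =
      Submodule.span (ZMod 3) (Set.range (triflectionEpsPart ∘ Fin.castSucc)) := by
    refine le_antisymm (Submodule.span_le.2 ?_)
      (Submodule.span_mono (Set.range_comp_subset_range _ _))
    rintro _ ⟨k, rfl⟩
    induction k using Fin.lastCases with
    | last =>
      rw [show Fin.last 5 = 5 from rfl, triflectionEpsPart_five]
      have h (i : Fin 5) : triflectionEpsPart i.castSucc ∈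
          Submodule.span (ZMod 3) (Set.range (triflectionEpsPart ∘ Fin.castSucc)) :=
        Submodule.subset_span ⟨i, rfl⟩
      exact add_mem (add_mem (add_mem (add_mem (h 0) (nsmul_mem (h 1) 2)) (h 2)) (h 3))
        (nsmul_mem (h 4) 2)
    | cast i => exact Submodule.subset_span ⟨i, rfl⟩
  rw [hspan, linearIndependent_triflectionEpsPart_castSucc.natCard_span]
  simp

lemma isUnit_of_conjTranspose_mul_J4_mul {M : Matrix (Fin 4) (Fin 4) ℂ} (h : Mᴴ * J4 * M = J4) :
    IsUnit M :=
  (Matrix.isUnit_iff_isUnit_det M).2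
    (Matrix.isUnit_det_of_left_inverse (J4_mul_conjTranspose_mul_J4_mul h))

lemma mem_triflections_iff {x : GL (Fin 4) ℂ} :
    x ∈ triflections ↔ ∃ k, (x : Matrix (Fin 4) (Fin 4) ℂ) =
      triflectionMatrix (Int.cast ∘ triVecsInt k) := by
  simp [triflections, triVecs_eq_range]

lemma exists_mem_triflections (k : Fin 6) : ∃ x ∈ triflections,
    (x : Matrix (Fin 4) (Fin 4) ℂ) = triflectionMatrix (Int.cast ∘ triVecsInt k) := by
  obtain ⟨x, hx⟩ := isUnit_of_conjTranspose_mul_J4_mul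
    (conjTranspose_triflectionMatrix_mul_J4_mul (norm_intCast_triVecsInt k))
  exact ⟨x, mem_triflections_iff.2 ⟨k, hx⟩, hx⟩

lemma triflections_subset_picardGroup : triflections ⊆ picardGroup := by
  intro x hx
  obtain ⟨k, hk⟩ := mem_triflections_iff.1 hx
  exact mem_picardGroup.2 ⟨hk ▸ triflectionMatrix_intCast_mem _,
    hk ▸ conjTranspose_triflectionMatrix_mul_J4_mul (norm_intCast_triVecsInt k)⟩

noncomputable def gPrime : Subgroup (GL (Fin 4) ℂ) :=
  Subgroup.closure ((picardGroupLevelThree : Set (GL (Fin 4) ℂ)) ∪ triflections)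

lemma gPrime_le_picardGroup : gPrime ≤ picardGroup :=
  Subgroup.closure_le _ |>.2 (Set.union_subset picardGroupLevelThree_le
    triflections_subset_picardGroup)

noncomputable def gPrime.reduce : gPrime →* GL (Fin 4) (DualNumber (ZMod 3)) :=
  picardGroup.reduce.comp (Subgroup.inclusion gPrime_le_picardGroup)

lemma range_gPrime_reduce : gPrime.reduce.range =
    (Subgroup.closure (Set.range (Multiplicative.ofAdd ∘ triflectionEpsPart))).map
      Matrix.dualUnit := by
  refine (Subgroup.range_comp_inclusion_closure (S := _ ∪ _) _ gPrime_le_picardGroup).trans ?_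
  rw [MonoidHom.map_closure]
  apply le_antisymm
  · rw [Subgroup.closure_le]
    rintro _ ⟨⟨x, hx⟩, hxS | hxS, rfl⟩
    · rw [picardGroup.reduce_eq_one (γ := x) hxS]
      exact one_mem _
    · obtain ⟨k, hk⟩ := mem_triflections_iff.1 hxS
      rw [picardGroup.reduce_triflection _ hx hk]
      exact Subgroup.subset_closure ⟨_, ⟨k, rfl⟩, rfl⟩
  · refine Subgroup.closure_mono ?_
    rintro _ ⟨_, ⟨k, rfl⟩, rfl⟩
    obtain ⟨x, hx, hxk⟩ := exists_mem_triflections k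
    exact ⟨⟨x, triflections_subset_picardGroup hx⟩, .inr hx,
      picardGroup.reduce_triflection _ _ hxk⟩

lemma card_range_gPrime_reduce : Nat.card gPrime.reduce.range = 243 := by
  have h : Subgroup.closure (Set.range (Multiplicative.ofAdd ∘ triflectionEpsPart)) =
      (AddSubgroup.closure (Set.range triflectionEpsPart)).toSubgroup := by
    rw [AddSubgroup.toSubgroup_closure]; rfl
  rw [range_gPrime_reduce, Subgroup.card_map_of_injective Matrix.dualUnit_injective, h,
    ← Submodule.span_zmod_eq_addSubgroupClosure 3]
  exact card_span_triflectionEpsPart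

lemma subgroupOf_gPrime_eq_ker :
    (Subgroup.closure ((picardGroupLevelThree : Set (GL (Fin 4) ℂ)) ∪ {-1})).subgroupOf gPrime =
      gPrime.reduce.ker := by
  ext ⟨x, hx⟩
  rw [Subgroup.mem_subgroupOf, MonoidHom.mem_ker]
  constructor
  · intro h
    rcases Subgroup.mem_or_neg_mem_of_mem_closure_union_neg_one _ h with h | h
    · exact picardGroup.reduce_eq_one h
    · have hneg : gPrime.reduce ⟨x, hx⟩ = -1 := by
        change picardGroup.reduce ⟨x, gPrime_le_picardGroup hx⟩ = -1
        rw [← neg_neg (picardGroup.reduce _),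
          ← picardGroup.reduce_neg _ (picardGroupLevelThree_le h), picardGroup.reduce_eq_one h]
      have hmem : gPrime.reduce ⟨x, hx⟩ ∈ Matrix.dualUnit.range :=
        Subgroup.map_le_range _ _ (by rw [← range_gPrime_reduce]; exact ⟨_, rfl⟩)
      exact absurd (hneg ▸ hmem) (Matrix.neg_one_notMem_range_dualUnit (R := ZMod 3) (by decide))
  · intro h
    exact Subgroup.subset_closure (.inl ⟨_, h, rfl⟩)

lemma relIndex_closure_union_neg_one_gPrime :
    (Subgroup.closure ((picardGroupLevelThree : Set (GL (Fin 4) ℂ)) ∪ {-1})).relIndex gPrime =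
      243 := by
  rw [Subgroup.relIndex, subgroupOf_gPrime_eq_ker, Subgroup.index_ker, card_range_gPrime_reduce]

theorem index_G33_neg_one_in_G' :
    ∃ G3 G33 : Subgroup (GL (Fin 4) ℂ),
      (∀ γ : GL (Fin 4) ℂ, γ ∈ G3 ↔
        ((∀ i j, IsEisenstein ((γ : Matrix (Fin 4) (Fin 4) ℂ) i j)) ∧
          (γ : Matrix (Fin 4) (Fin 4) ℂ)ᴴ * J4 * (γ : Matrix (Fin 4) (Fin 4) ℂ) = J4)) ∧
      (∀ γ : GL (Fin 4) ℂ, γ ∈ G33 ↔ (γ ∈ G3 ∧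
        ∀ i j, ∃ a b : ℤ,
          ((γ : Matrix (Fin 4) (Fin 4) ℂ) - 1) i j = 3 * ((a : ℂ) + (b : ℂ) * ω))) ∧
      (Subgroup.closure ((G33 : Set (GL (Fin 4) ℂ)) ∪ {-1})).relIndex
          (Subgroup.closure ((G33 : Set (GL (Fin 4) ℂ)) ∪ triflections)) = 243 := by
  exact ⟨picardGroup, picardGroupLevelThree, fun _ => mem_picardGroup,
    fun _ => mem_picardGroupLevelThree, relIndex_closure_union_neg_one_gPrime⟩
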